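/- arXiv:2101.08688 — 5 statements merged into one kernel-verified Lean document; each statement's English description precedes it below -/
import Mathlib

section
/- The HMC operator is a contraction in weighted L^q norm: for q ≥ 1 and nonnegative h with ‖h‖_q < ∞, one has ‖T h‖_q ≤ ‖h‖_q, where ‖h‖_q^q = ∫_Q |h/f|^q f. -/
/-!
Write `h = φ f`. Invariance of `f ⊗ g` under `H` turns `T h / f` into the average
`x ↦ ∫ φ (H (x, y)).1 g y dν(y)` of `φ ∘ H` against the probability density `g`, so by Jensen
`|T h / f| ^ q` is at most the corresponding average of `|φ ∘ H| ^ q`. Integrated against `f`, this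
is the integral of `|φ ∘ H| ^ q` against the invariant density `f ⊗ g` on `Q × P`, which equals
`∫ |φ| ^ q f` because `H` preserves `μ ⊗ ν` and `∫ g = 1`.
-/

open MeasureTheory ENNReal

section

variable {α : Type*} [MeasurableSpace α]

theorem ofReal_integral_le_lintegral_ofReal {μ : Measure α} {f : α → ℝ} (hf : ∀ a, 0 ≤ f a) :
    ENNReal.ofReal (∫ a, f a ∂μ) ≤ ∫⁻ a, .ofReal (f a) ∂μ := by
  simpa only [Real.enorm_of_nonneg (integral_nonneg hf), Real.enorm_of_nonneg (hf _)] using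
    enorm_integral_le_lintegral_enorm f

/- Pass to a measurable minorant of `u` with the same integral; for it this is the `L¹ ≤ L^q`
bound on a probability space. -/
theorem rpow_lintegral_le_lintegral_rpow (ρ : Measure α) [IsProbabilityMeasure ρ]
    (u : α → ℝ≥0∞) {q : ℝ} (hq : 1 ≤ q) :
    (∫⁻ a, u a ∂ρ) ^ q ≤ ∫⁻ a, u a ^ q ∂ρ := by
  have hq0 : 0 < q := zero_lt_one.trans_le hq
  obtain ⟨v, hv, hvu, hint⟩ := exists_measurable_le_lintegral_eq ρ u
  have hLp : eLpNorm v 1 ρ ≤ eLpNorm v (.ofReal q) ρ :=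
    eLpNorm_le_eLpNorm_of_exponent_le (by simpa using hq) hv.aestronglyMeasurable
  rw [eLpNorm_one_eq_lintegral_enorm, eLpNorm_eq_lintegral_rpow_enorm_toReal
    (by simpa using hq0) ofReal_ne_top, toReal_ofReal hq0.le] at hLp
  simp only [enorm_eq_self] at hLp
  calc (∫⁻ a, u a ∂ρ) ^ q = (∫⁻ a, v a ∂ρ) ^ q := by rw [hint]
    _ ≤ ((∫⁻ a, v a ^ q ∂ρ) ^ (1 / q)) ^ q := rpow_le_rpow hLp hq0.le
    _ = ∫⁻ a, v a ^ q ∂ρ := by rw [← rpow_mul, one_div_mul_cancel hq0.ne', rpow_one]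
    _ ≤ ∫⁻ a, u a ^ q ∂ρ := lintegral_mono fun a ↦ rpow_le_rpow (hvu a) hq0.le

theorem lintegral_ofReal_eq_one {ν : Measure α} {g : α → ℝ} (hg0 : ∀ y, 0 ≤ g y)
    (hg : ∫ y, g y ∂ν = 1) : ∫⁻ y, .ofReal (g y) ∂ν = 1 := by
  rw [← ofReal_integral_eq_lintegral_ofReal (.of_integral_ne_zero (by simp [hg])) (.of_forall hg0),
    hg, ofReal_one]

theorem enorm_integral_mul_rpow_le {ν : Measure α} {g : α → ℝ} (hg0 : ∀ y, 0 ≤ g y)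
    (hg : ∫ y, g y ∂ν = 1) (ψ : α → ℝ) {q : ℝ} (hq : 1 ≤ q) :
    ‖∫ y, ψ y * g y ∂ν‖ₑ ^ q ≤ ∫⁻ y, ‖ψ y‖ₑ ^ q * .ofReal (g y) ∂ν := by
  have hw : AEMeasurable (fun y ↦ ENNReal.ofReal (g y)) ν :=
    (Integrable.of_integral_ne_zero (by simp [hg])).aemeasurable.ennreal_ofReal
  have hw1 := lintegral_ofReal_eq_one hg0 hg
  have hρ : IsProbabilityMeasure (ν.withDensity fun y ↦ .ofReal (g y)) :=
    ⟨by rw [withDensity_apply _ MeasurableSet.univ, Measure.restrict_univ, hw1]⟩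
  have hdens (u : α → ℝ≥0∞) :
      ∫⁻ y, u y * .ofReal (g y) ∂ν = ∫⁻ y, u y ∂(ν.withDensity fun y ↦ .ofReal (g y)) := by
    rw [lintegral_withDensity_eq_lintegral_mul_non_measurable₀ _ hw
      (ae_lt_top' hw (by simp [hw1]))]
    simp only [Pi.mul_apply, mul_comm]
  calc ‖∫ y, ψ y * g y ∂ν‖ₑ ^ q ≤ (∫⁻ y, ‖ψ y‖ₑ * .ofReal (g y) ∂ν) ^ q := by
        refine rpow_le_rpow ((enorm_integral_le_lintegral_enorm _).trans_eq ?_) (by linarith)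
        simp only [enorm_mul, Real.enorm_of_nonneg (hg0 _)]
    _ ≤ ∫⁻ y, ‖ψ y‖ₑ ^ q * .ofReal (g y) ∂ν := by
        rw [hdens, hdens]
        exact rpow_lintegral_le_lintegral_rpow _ _ hq

end

theorem MeasureTheory.MeasurePreserving.lintegral_comp_mul_of_comp_eq {α : Type*}
    [MeasurableSpace α] {π : Measure α} {H : α → α} (hH : MeasurePreserving H π π)
    {u D : α → ℝ≥0∞} (hu : AEMeasurable u π) (hD : AEMeasurable D π) (hDH : ∀ z, D (H z) = D z) :
    ∫⁻ z, u (H z) * D z ∂π = ∫⁻ z, u z * D z ∂π := by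
  have huD : AEMeasurable (fun z ↦ u z * D z) (π.map H) := hH.map_eq.symm ▸ hu.mul hD
  calc ∫⁻ z, u (H z) * D z ∂π = ∫⁻ z, u (H z) * D (H z) ∂π := by simp only [hDH]
    _ = ∫⁻ z, u z * D z ∂(π.map H) := (lintegral_map' huD hH.aemeasurable).symm
    _ = ∫⁻ z, u z * D z ∂π := by rw [hH.map_eq]

theorem ofReal_abs_rpow_mul {a b q : ℝ} (hb : 0 ≤ b) (hq : 0 ≤ q) :
    ENNReal.ofReal (|a| ^ q * b) = ‖a‖ₑ ^ q * .ofReal b := by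
  rw [ofReal_mul' hb, ← ofReal_rpow_of_nonneg (abs_nonneg a) hq, Real.enorm_eq_ofReal_abs]

section

variable {Q P : Type*} [MeasurableSpace P] {ν : Measure P} {f : Q → ℝ} {g : P → ℝ}
  {H : Q × P → Q × P}

theorem div_integral_comp_eq_integral_div_comp (hf : ∀ x, f x ≠ 0)
    (hfg : ∀ z, f (H z).1 * g (H z).2 = f z.1 * g z.2) (h : Q → ℝ) (x : Q) :
    (∫ y, h (H (x, y)).1 * g (H (x, y)).2 ∂ν) / f x = ∫ y, (h / f) (H (x, y)).1 * g y ∂ν := by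
  have hpt (y : P) : h (H (x, y)).1 * g (H (x, y)).2 = f x * ((h / f) (H (x, y)).1 * g y) :=
    calc h (H (x, y)).1 * g (H (x, y)).2
        = (h / f) (H (x, y)).1 * (f (H (x, y)).1 * g (H (x, y)).2) := by
          rw [Pi.div_apply]; field_simp [hf]
      _ = f x * ((h / f) (H (x, y)).1 * g y) := by rw [hfg]; ring
  simp_rw [hpt, integral_const_mul, mul_div_cancel_left₀ _ (hf x)]

theorem lintegral_enorm_integral_comp_rpow_le [MeasurableSpace Q] {μ : Measure Q} [SFinite ν]
    (hf : AEMeasurable f μ) (hg0 : ∀ y, 0 ≤ g y) (hg : ∫ y, g y ∂ν = 1)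
    (hH : MeasurePreserving H (μ.prod ν) (μ.prod ν))
    (hfg : ∀ z, f (H z).1 * g (H z).2 = f z.1 * g z.2) {φ : Q → ℝ} (hφ : AEMeasurable φ μ)
    {q : ℝ} (hq : 1 ≤ q) :
    ∫⁻ x, ‖∫ y, φ (H (x, y)).1 * g y ∂ν‖ₑ ^ q * .ofReal (f x) ∂μ
      ≤ ∫⁻ x, ‖φ x‖ₑ ^ q * .ofReal (f x) ∂μ := by
  have hg_meas : AEMeasurable g ν := (Integrable.of_integral_ne_zero (by simp [hg])).aemeasurable
  have hu : AEMeasurable (fun z : Q × P ↦ ‖φ z.1‖ₑ ^ q) (μ.prod ν) :=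
    hφ.comp_fst.enorm.pow_const q
  have hD : AEMeasurable (fun z : Q × P ↦ ENNReal.ofReal (f z.1 * g z.2)) (μ.prod ν) :=
    (hf.comp_fst.mul hg_meas.comp_snd).ennreal_ofReal
  calc ∫⁻ x, ‖∫ y, φ (H (x, y)).1 * g y ∂ν‖ₑ ^ q * .ofReal (f x) ∂μ
      ≤ ∫⁻ x, (∫⁻ y, ‖φ (H (x, y)).1‖ₑ ^ q * .ofReal (g y) ∂ν) * .ofReal (f x) ∂μ :=
        lintegral_mono fun x ↦ mul_le_mul_left (enorm_integral_mul_rpow_le hg0 hg _ hq) _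
    _ = ∫⁻ z, ‖φ (H z).1‖ₑ ^ q * .ofReal (f z.1 * g z.2) ∂(μ.prod ν) := by
        have hG : AEMeasurable (fun z ↦ ‖φ (H z).1‖ₑ ^ q * .ofReal (f z.1 * g z.2)) (μ.prod ν) :=
          (hu.comp_quasiMeasurePreserving hH.quasiMeasurePreserving).mul hD
        rw [lintegral_prod _ hG]
        refine lintegral_congr fun x ↦ ?_
        rw [← lintegral_mul_const' _ _ ofReal_ne_top]
        simp only [ofReal_mul' (hg0 _), mul_assoc, mul_comm (ENNReal.ofReal (g _))]
    _ = ∫⁻ z, ‖φ z.1‖ₑ ^ q * .ofReal (f z.1 * g z.2) ∂(μ.prod ν) :=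
        hH.lintegral_comp_mul_of_comp_eq hu hD fun z ↦ by rw [hfg]
    _ = ∫⁻ x, ‖φ x‖ₑ ^ q * .ofReal (f x) ∂μ := by
        have hv : AEMeasurable (fun x ↦ ‖φ x‖ₑ ^ q * .ofReal (f x)) μ :=
          (hφ.enorm.pow_const q).mul hf.ennreal_ofReal
        simp only [ofReal_mul' (hg0 _), ← mul_assoc]
        rw [lintegral_prod_mul hv hg_meas.ennreal_ofReal, lintegral_ofReal_eq_one hg0 hg, mul_one]

end

theorem hmc_operator_contraction_general
    {Q P : Type*} [MeasurableSpace Q] [MeasurableSpace P]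
    (μ : Measure Q) (ν : Measure P) [SigmaFinite ν]
    (f : Q → ℝ) (hf_pos : ∀ x, 0 < f x) (hf_int : Integrable f μ)
    (g : P → ℝ) (hg_pos : ∀ y, 0 < g y) (hg_prob : ∫ y, g y ∂ν = 1)
    (H : Q × P → Q × P)
    (hH_meas : MeasurePreserving H (μ.prod ν) (μ.prod ν))
    (hH_inv : ∀ z : Q × P, f (H z).1 * g (H z).2 = f z.1 * g z.2)
    (q : ℝ) (hq : 1 ≤ q)
    (h : Q → ℝ) (h_meas : Measurable h)
    (h_mem : Integrable (fun x => |h x / f x| ^ q * f x) μ) :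
    (∫ x, |(∫ y, h (H (x, y)).1 * g (H (x, y)).2 ∂ν) / f x| ^ q * f x ∂μ) ^ (1 / q)
      ≤ (∫ x, |h x / f x| ^ q * f x ∂μ) ^ (1 / q) := by
  have hq0 : 0 ≤ q := zero_le_one.trans hq
  have hweighted_nonneg (a : Q → ℝ) (x : Q) : 0 ≤ |a x| ^ q * f x :=
    mul_nonneg (by positivity) (hf_pos x).le
  refine Real.rpow_le_rpow (integral_nonneg (hweighted_nonneg _)) ?_ (by positivity)
  simp_rw [div_integral_comp_eq_integral_div_comp (fun x ↦ (hf_pos x).ne') hH_inv]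
  rw [← ofReal_le_ofReal_iff (integral_nonneg (hweighted_nonneg _)),
    ofReal_integral_eq_lintegral_ofReal h_mem (.of_forall (hweighted_nonneg _))]
  calc ENNReal.ofReal (∫ x, |∫ y, (h / f) (H (x, y)).1 * g y ∂ν| ^ q * f x ∂μ)
      ≤ ∫⁻ x, ‖∫ y, (h / f) (H (x, y)).1 * g y ∂ν‖ₑ ^ q * .ofReal (f x) ∂μ := by
        simpa only [ofReal_abs_rpow_mul (hf_pos _).le hq0] using
          ofReal_integral_le_lintegral_ofReal (hweighted_nonneg _)
    _ ≤ ∫⁻ x, ‖(h / f) x‖ₑ ^ q * .ofReal (f x) ∂μ :=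
        lintegral_enorm_integral_comp_rpow_le hf_int.aemeasurable (fun y ↦ (hg_pos y).le) hg_prob
          hH_meas hH_inv (h_meas.aemeasurable.div hf_int.aemeasurable) hq
    _ = ∫⁻ x, .ofReal (|h x / f x| ^ q * f x) ∂μ := by
        simp only [ofReal_abs_rpow_mul (hf_pos _).le hq0, Pi.div_apply]

/-- The HMC operator is a contraction in the weighted `L^q` norm: `‖T h‖_q ≤ ‖h‖_q`. -/
theorem hmc_operator_contraction
    {Q P : Type*} [MeasurableSpace Q] [MeasurableSpace P]
    (μ : Measure Q) (ν : Measure P) [SigmaFinite μ] [SigmaFinite ν]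
    (f : Q → ℝ) (hf_pos : ∀ x, 0 < f x) (hf_int : Integrable f μ)
    (g : P → ℝ) (hg_pos : ∀ y, 0 < g y) (hg_prob : ∫ y, g y ∂ν = 1)
    (H : Q × P → Q × P) (hH_bij : Function.Bijective H)
    (hH_meas : MeasurePreserving H (μ.prod ν) (μ.prod ν))
    (hH_inv : ∀ z : Q × P, f (H z).1 * g (H z).2 = f z.1 * g z.2)
    (q : ℝ) (hq : 1 ≤ q)
    (h : Q → ℝ) (h_meas : Measurable h) (h_nonneg : ∀ x, 0 ≤ h x)
    (h_mem : Integrable (fun x => |h x / f x| ^ q * f x) μ)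
    (h_int' : Integrable (fun z : Q × P => h (H z).1 * g (H z).2) (μ.prod ν)) :
    (∫ x, |(∫ y, h (H (x, y)).1 * g (H (x, y)).2 ∂ν) / f x| ^ q * f x ∂μ) ^ (1 / q)
      ≤ (∫ x, |h x / f x| ^ q * f x ∂μ) ^ (1 / q) :=
  hmc_operator_contraction_general μ ν f hf_pos hf_int g hg_pos hg_prob H hH_meas hH_inv q hq h
    h_meas h_mem
end

section
/- The operator T† defined with H^{-1} in place of H is the adjoint of T with respect to the weighted pairing: ⟨T h, k⟩ = ⟨h, T† k⟩ for h ∈ L^q, k ∈ L^p. -/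
/-!
Write `ρ (x, y) = f x * g y`, so that `ρ ∘ H = ρ`. By this invariance the integrand of the
left side, as a function on `Q × P`, is `φ z = (h / f) (H z).1 * (k / f) z.1 * ρ z`, and
that of the right side is `φ ∘ H⁻¹`; the two integrals agree by Fubini and the invariance of
`μ.prod ν` under `H⁻¹`. Fubini applies because Young's inequality
`|a b| ρ ≤ |a|^q ρ / q + |b|^p ρ / p`, with the invariance of `ρ` and of the measure under `H`,
bounds `φ` by an integrable function.
-/

open MeasureTheory

theorem Real.abs_mul_mul_le_of_holderConjugate {p q a b c : ℝ} (hpq : p.HolderConjugate q)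
    (hc : 0 ≤ c) : |a * b| * c ≤ |a| ^ p * c / p + |b| ^ q * c / q :=
  calc |a * b| * c ≤ (|a| ^ p / p + |b| ^ q / q) * c := by
        rw [abs_mul]
        exact mul_le_mul_of_nonneg_right
          (young_inequality_of_nonneg (abs_nonneg a) (abs_nonneg b) hpq) hc
    _ = |a| ^ p * c / p + |b| ^ q * c / q := by ring

namespace MeasureTheory

variable {X : Type*} [MeasurableSpace X] {m : Measure X}

theorem Integrable.mul_mul_of_holderConjugate {p q : ℝ} (hpq : p.HolderConjugate q)
    {a b ρ : X → ℝ} (hρ : ∀ x, 0 ≤ ρ x)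
    (ha : Integrable (fun x => |a x| ^ p * ρ x) m) (hb : Integrable (fun x => |b x| ^ q * ρ x) m)
    (hab : AEStronglyMeasurable (fun x => a x * b x * ρ x) m) :
    Integrable (fun x => a x * b x * ρ x) m :=
  ((ha.div_const p).add (hb.div_const q)).mono' hab <| .of_forall fun x => by
    rw [Real.norm_eq_abs, abs_mul _ (ρ x), abs_of_nonneg (hρ x)]
    exact Real.abs_mul_mul_le_of_holderConjugate hpq (hρ x)

theorem Integrable.comp_mul_mul_of_holderConjugate {T : X → X} (hT : MeasurePreserving T m m)
    {p q : ℝ} (hpq : p.HolderConjugate q) {a b ρ : X → ℝ} (hρ : ∀ x, 0 ≤ ρ x)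
    (hρT : ∀ x, ρ (T x) = ρ x)
    (ha : Integrable (fun x => |a x| ^ p * ρ x) m) (hb : Integrable (fun x => |b x| ^ q * ρ x) m)
    (hab : AEStronglyMeasurable (fun x => a (T x) * b x * ρ x) m) :
    Integrable (fun x => a (T x) * b x * ρ x) m :=
  .mul_mul_of_holderConjugate hpq hρ
    (by simpa only [Function.comp_def, hρT] using hT.integrable_comp_of_integrable ha) hb hab

theorem integral_prod_mul_comp_fst {Q P : Type*} [MeasurableSpace Q] [MeasurableSpace P]
    {μ : Measure Q} {ν : Measure P} [SFinite μ] [SFinite ν] {F : Q × P → ℝ} {c : Q → ℝ}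
    (hF : Integrable (fun z => F z * c z.1) (μ.prod ν)) :
    ∫ z, F z * c z.1 ∂μ.prod ν = ∫ x, (∫ y, F (x, y) ∂ν) * c x ∂μ := by
  simp_rw [← integral_mul_const]
  exact integral_prod _ hF

theorem MeasurePreserving.integral_comp_of_aestronglyMeasurable {T : X → X}
    (hT : MeasurePreserving T m m) {F : X → ℝ} (hF : AEStronglyMeasurable F m) :
    ∫ x, F (T x) ∂m = ∫ x, F x ∂m := by
  rw [← integral_map hT.aemeasurable (by rwa [hT.map_eq]), hT.map_eq]

end MeasureTheory

theorem hmc_adjoint_general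
    {Q P : Type*} [MeasurableSpace Q] [MeasurableSpace P]
    (μ : Measure Q) (ν : Measure P) [SigmaFinite μ] [SigmaFinite ν]
    (f : Q → ℝ) (hf_pos : ∀ x, 0 < f x) (hf_int : Integrable f μ)
    (g : P → ℝ) (hg_pos : ∀ y, 0 < g y) (hg_prob : ∫ y, g y ∂ν = 1)
    (H Hinv : Q × P → Q × P)
    (hHinv : Function.LeftInverse Hinv H ∧ Function.RightInverse Hinv H)
    (hH_meas : MeasurePreserving H (μ.prod ν) (μ.prod ν))
    (hHinv_meas : MeasurePreserving Hinv (μ.prod ν) (μ.prod ν))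
    (hH_inv : ∀ z : Q × P, f (H z).1 * g (H z).2 = f z.1 * g z.2)
    (q p : ℝ) (hq : 1 < q) (hqp : 1 / q + 1 / p = 1)
    (h k : Q → ℝ) (h_meas : Measurable h) (k_meas : Measurable k)
    (h_mem : Integrable (fun x => |h x / f x| ^ q * f x) μ)
    (k_mem : Integrable (fun x => |k x / f x| ^ p * f x) μ) :
    ∫ x, (∫ y, h (H (x, y)).1 * g (H (x, y)).2 ∂ν) * k x / f x ∂μ
      = ∫ x, h x * (∫ y, k (Hinv (x, y)).1 * g (Hinv (x, y)).2 ∂ν) / f x ∂μ := by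
  have hpq : q.HolderConjugate p :=
    Real.holderConjugate_iff.mpr ⟨hq, by simpa only [one_div] using hqp⟩
  have hf_ne x : f x ≠ 0 := (hf_pos x).ne'
  have hg_int : Integrable g ν := .of_integral_ne_zero (by rw [hg_prob]; exact one_ne_zero)
  set φ : Q × P → ℝ := fun z => h (H z).1 * g (H z).2 * (k z.1 / f z.1)
  set ψ : Q × P → ℝ := fun z => k (Hinv z).1 * g (Hinv z).2 * (h z.1 / f z.1)
  have hφ_eq : φ = fun z => h (H z).1 / f (H z).1 * (k z.1 / f z.1) * (f z.1 * g z.2) := by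
    ext z
    simp only [φ]
    rw [← hH_inv z]
    field_simp [hf_ne]
  have hψ_eq : ψ = φ ∘ Hinv := by
    ext z
    have hz := hH_inv (Hinv z)
    simp only [ψ, φ, Function.comp, hHinv.2 z] at hz ⊢
    field_simp [hf_ne]
    linear_combination -(k (Hinv z).1 * h z.1) * hz
  have hφ_meas : AEStronglyMeasurable φ (μ.prod ν) :=
    ((h_meas.aestronglyMeasurable.comp_fst.mul
      hg_int.aestronglyMeasurable.comp_snd).comp_measurePreserving hH_meas).mul
      (k_meas.aemeasurable.div hf_int.aemeasurable).aestronglyMeasurable.comp_fst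
  have hφ_int : Integrable φ (μ.prod ν) := by
    rw [hφ_eq] at hφ_meas ⊢
    exact .comp_mul_mul_of_holderConjugate hH_meas hpq
      (fun z => (mul_pos (hf_pos _) (hg_pos _)).le) hH_inv
      (by simpa only [mul_assoc] using h_mem.mul_prod hg_int)
      (by simpa only [mul_assoc] using k_mem.mul_prod hg_int) hφ_meas
  have hψ_int : Integrable ψ (μ.prod ν) :=
    hψ_eq ▸ hHinv_meas.integrable_comp_of_integrable hφ_int
  calc ∫ x, (∫ y, h (H (x, y)).1 * g (H (x, y)).2 ∂ν) * k x / f x ∂μ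
      = ∫ z, φ z ∂μ.prod ν := by
        simp_rw [mul_div_assoc]
        exact (integral_prod_mul_comp_fst (F := fun z => h (H z).1 * g (H z).2)
          (c := fun x => k x / f x) hφ_int).symm
    _ = ∫ z, ψ z ∂μ.prod ν := by
        rw [hψ_eq]
        exact (hHinv_meas.integral_comp_of_aestronglyMeasurable hφ_meas).symm
    _ = ∫ x, h x * (∫ y, k (Hinv (x, y)).1 * g (Hinv (x, y)).2 ∂ν) / f x ∂μ := by
        rw [integral_prod_mul_comp_fst (F := fun z => k (Hinv z).1 * g (Hinv z).2)
          (c := fun x => h x / f x) hψ_int]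
        congr with x
        ring

/-- `T†` (defined with `H⁻¹` in place of `H`) is the adjoint of `T` with respect to
the weighted pairing `⟨a,b⟩ = ∫_Q ab/f`. -/
theorem hmc_adjoint
    {Q P : Type*} [MeasurableSpace Q] [MeasurableSpace P]
    (μ : Measure Q) (ν : Measure P) [SigmaFinite μ] [SigmaFinite ν]
    (f : Q → ℝ) (hf_pos : ∀ x, 0 < f x) (hf_int : Integrable f μ)
    (g : P → ℝ) (hg_pos : ∀ y, 0 < g y) (hg_prob : ∫ y, g y ∂ν = 1)
    (H Hinv : Q × P → Q × P)
    (hHinv : Function.LeftInverse Hinv H ∧ Function.RightInverse Hinv H)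
    (hH_meas : MeasurePreserving H (μ.prod ν) (μ.prod ν))
    (hHinv_meas : MeasurePreserving Hinv (μ.prod ν) (μ.prod ν))
    (hH_inv : ∀ z : Q × P, f (H z).1 * g (H z).2 = f z.1 * g z.2)
    (q p : ℝ) (hq : 1 < q) (hp : 1 < p) (hqp : 1 / q + 1 / p = 1)
    (h k : Q → ℝ) (h_meas : Measurable h) (k_meas : Measurable k)
    (h_mem : Integrable (fun x => |h x / f x| ^ q * f x) μ)
    (k_mem : Integrable (fun x => |k x / f x| ^ p * f x) μ)
    (h_int' : Integrable (fun z : Q × P => h (H z).1 * g (H z).2) (μ.prod ν))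
    (k_int' : Integrable (fun z : Q × P => k (Hinv z).1 * g (Hinv z).2) (μ.prod ν)) :
    ∫ x, (∫ y, h (H (x, y)).1 * g (H (x, y)).2 ∂ν) * k x / f x ∂μ
      = ∫ x, h x * (∫ y, k (Hinv (x, y)).1 * g (Hinv (x, y)).2 ∂ν) / f x ∂μ :=
  hmc_adjoint_general μ ν f hf_pos hf_int g hg_pos hg_prob H Hinv hHinv hH_meas hHinv_meas hH_inv q
    p hq hqp h k h_meas k_meas h_mem k_mem
end

section
/- If σ : P → P is a measure-preserving involution, g∘σ = g, and (extending σ to Q×P by σ(q,p) = (q,σ(p))) one has σ∘H^{-1}∘σ = H, then the HMC operator is self-adjoint: T† = T. -/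
open MeasureTheory

/-! The substitution `y ↦ σ y` preserves `ν`; it turns `(h ⊗ g) ∘ H⁻¹` into `(h ⊗ g) ∘ H`, because
`H = σ̃ ∘ H⁻¹ ∘ σ̃` and `h ⊗ g` is invariant under `σ̃ (q, p) = (q, σ p)`. -/

theorem MeasureTheory.MeasurePreserving.integral_comp_of_involutive {P E : Type*}
    [MeasurableSpace P] [NormedAddCommGroup E] [NormedSpace ℝ E] {ν : Measure P} {σ : P → P}
    (hσ : MeasurePreserving σ ν ν) (hσ_inv : Function.Involutive σ) (f : P → E) :
    ∫ y, f (σ y) ∂ν = ∫ y, f y ∂ν :=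
  hσ.integral_comp (MeasurableEquiv.ofInvolutive σ hσ_inv hσ.measurable).measurableEmbedding f

theorem integral_comp_inv_eq_integral_comp_of_reversible {Q P E : Type*} [MeasurableSpace P]
    [NormedAddCommGroup E] [NormedSpace ℝ E] {ν : Measure P} {σ : P → P}
    (hσ : MeasurePreserving σ ν ν) (hσ_inv : Function.Involutive σ)
    (φ : Q × P → E) (hφ : ∀ z, φ (z.1, σ z.2) = φ z) (H Hinv : Q × P → Q × P)
    (hrev : ∀ z, ((Hinv (z.1, σ z.2)).1, σ (Hinv (z.1, σ z.2)).2) = H z) (x : Q) :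
    ∫ y, φ (Hinv (x, y)) ∂ν = ∫ y, φ (H (x, y)) ∂ν :=
  calc ∫ y, φ (Hinv (x, y)) ∂ν
      = ∫ y, φ (Hinv (x, σ y)) ∂ν :=
        (hσ.integral_comp_of_involutive hσ_inv fun y ↦ φ (Hinv (x, y))).symm
    _ = ∫ y, φ (H (x, y)) ∂ν := by
        congr 1 with y
        rw [← hrev (x, y), hφ]

theorem hmc_self_adjoint_of_involution_general
    {Q P : Type*} [MeasurableSpace P]
    (ν : Measure P)
    (g : P → ℝ)
    (H Hinv : Q × P → Q × P)
    (σ : P → P) (hσ_meas : MeasurePreserving σ ν ν)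
    (hσ_inv : ∀ y, σ (σ y) = y)
    (hgσ : ∀ y, g (σ y) = g y)
    (hσH : ∀ z : Q × P, ((Hinv (z.1, σ z.2)).1, σ (Hinv (z.1, σ z.2)).2) = H z) :
    ∀ (h : Q → ℝ) (x : Q),
      (∫ y, h (Hinv (x, y)).1 * g (Hinv (x, y)).2 ∂ν)
        = ∫ y, h (H (x, y)).1 * g (H (x, y)).2 ∂ν :=
  fun h ↦ integral_comp_inv_eq_integral_comp_of_reversible hσ_meas hσ_inv
    (fun z ↦ h z.1 * g z.2) (fun z ↦ by rw [hgσ]) H Hinv hσH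

/-- If `σ` is a measure-preserving involution of `P` with `g ∘ σ = g` and
(extending `σ` to `Q × P` by `σ(q,p) = (q, σ p)`) `σ ∘ H⁻¹ ∘ σ = H`,
then the HMC operator is self-adjoint: `T† = T`. -/
theorem hmc_self_adjoint_of_involution
    {Q P : Type*} [MeasurableSpace Q] [MeasurableSpace P]
    (μ : Measure Q) (ν : Measure P) [SigmaFinite μ] [SigmaFinite ν]
    (g : P → ℝ) (hg_pos : ∀ y, 0 < g y) (hg_prob : ∫ y, g y ∂ν = 1)
    (H Hinv : Q × P → Q × P)
    (hHinv : Function.LeftInverse Hinv H ∧ Function.RightInverse Hinv H)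
    (hH_meas : MeasurePreserving H (μ.prod ν) (μ.prod ν))
    (hHinv_meas : MeasurePreserving Hinv (μ.prod ν) (μ.prod ν))
    (σ : P → P) (hσ_meas : MeasurePreserving σ ν ν)
    (hσ_inv : ∀ y, σ (σ y) = y)
    (hgσ : ∀ y, g (σ y) = g y)
    (hσH : ∀ z : Q × P, ((Hinv (z.1, σ z.2)).1, σ (Hinv (z.1, σ z.2)).2) = H z) :
    ∀ (h : Q → ℝ) (x : Q),
      (∫ y, h (Hinv (x, y)).1 * g (Hinv (x, y)).2 ∂ν)
        = ∫ y, h (H (x, y)).1 * g (H (x, y)).2 ∂ν :=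
  hmc_self_adjoint_of_involution_general ν g H Hinv σ hσ_meas hσ_inv hgσ hσH
end

section
/- If T is a positive self-adjoint mass-preserving contraction on weighted L^q (q ≥ 2) with strict contraction off the fixed ray ℝ·f, then any weak limit h∞ of a subsequence T^{m_n}(h₀) with h₀ ≥ 0 satisfies ‖h∞‖_q^q = V, where V = lim_n ‖T^n h₀‖_q^q. -/
/-!
Write `a*` for `wconj f q a`, so that `⟨a, a*⟩ = ‖a‖_q^q = ‖a*‖_p^p`, and `W = ‖h∞‖_q^q`.

Testing the weak convergence against `h∞*` and using Hölder gives `W ≤ V^{1/q} W^{1/p}`,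
hence `W ≤ V`.

Conversely, pass to a subsequence of `m` of constant parity. For `a = T^{m_j} h₀` and a later
index `m_n = m_j + 2r`, self-adjointness and the conjugate comparison `(T^r a)* ≤ T^r a*` give
`⟨T^{m_n} h₀, a*⟩ = ⟨T^r a, T^r a*⟩ ≥ ⟨T^r a, (T^r a)*⟩ = ‖T^r a‖_q^q ≥ V`.
Letting `n → ∞` and using Hölder, `V ≤ ⟨h∞, a*⟩ ≤ W^{1/q} ‖T^{m_j} h₀‖_q^{q/p}`, and letting
`j → ∞`, `V ≤ W^{1/q} V^{1/p}`, hence `V ≤ W`.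
-/

open MeasureTheory Filter

/-- The weighted pairing `⟨a,b⟩ = ∫_Q a·b/f`. -/
noncomputable def wpair {Q : Type*} [MeasurableSpace Q] (μ : Measure Q) (f a b : Q → ℝ) : ℝ :=
  ∫ x, a x * b x / f x ∂μ

/-- The `q`-th power of the weighted `L^q` norm, `‖h‖_q^q = ∫_Q |h/f|^q f`. -/
noncomputable def wnormPow {Q : Type*} [MeasurableSpace Q] (μ : Measure Q) (f : Q → ℝ)
    (q : ℝ) (h : Q → ℝ) : ℝ :=
  ∫ x, |h x / f x| ^ q * f x ∂μ

/-- Membership in the weighted `L^q` space. -/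
def memWL {Q : Type*} [MeasurableSpace Q] (μ : Measure Q) (f : Q → ℝ) (q : ℝ)
    (h : Q → ℝ) : Prop :=
  Measurable h ∧ Integrable (fun x => |h x / f x| ^ q * f x) μ

/-- The conjugacy map `h* = h (|h|/f)^(q-2)`. -/
noncomputable def wconj {Q : Type*} (f : Q → ℝ) (q : ℝ) (h : Q → ℝ) : Q → ℝ :=
  fun x => h x * (|h x| / f x) ^ (q - 2)

section Pointwise

variable {Q : Type*} {f h : Q → ℝ} {q p : ℝ} {x : Q}

lemma mul_wconj_div (hf : 0 < f x) (hq : q ≠ 0) :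
    h x * wconj f q h x / f x = |h x / f x| ^ q * f x := by
  have ht : |h x / f x| = |h x| / f x := by rw [abs_div, abs_of_pos hf]
  have ht0 : 0 ≤ |h x| / f x := div_nonneg (abs_nonneg _) hf.le
  have hsplit : (|h x| / f x) ^ q = (|h x| / f x) ^ (2 : ℝ) * (|h x| / f x) ^ (q - 2) := by
    rw [← Real.rpow_add' ht0 (by simpa using hq)]
    ring_nf
  rw [ht, hsplit, Real.rpow_two, wconj, div_pow, sq_abs]
  field_simp

lemma abs_wconj_div_rpow_mul (hf : 0 < f x) (hpq : q.HolderConjugate p) :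
    |wconj f q h x / f x| ^ p * f x = |h x / f x| ^ q * f x := by
  have ht : |h x / f x| = |h x| / f x := by rw [abs_div, abs_of_pos hf]
  have ht0 : 0 ≤ |h x| / f x := div_nonneg (abs_nonneg _) hf.le
  have hconj : |wconj f q h x / f x| = (|h x| / f x) ^ (q - 1) := by
    have hne : 1 + (q - 2) ≠ 0 := by linarith [hpq.sub_one_pos]
    rw [show q - 1 = 1 + (q - 2) by ring, Real.rpow_add' ht0 hne, Real.rpow_one, wconj, abs_div,
      abs_mul, abs_of_pos hf, abs_of_nonneg (Real.rpow_nonneg ht0 _)]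
    ring
  rw [hconj, ht, ← Real.rpow_mul ht0, hpq.sub_one_mul_conj]

lemma abs_le_add_rpow_mul (hf : 0 < f x) (hq : 1 ≤ q) :
    |h x| ≤ f x + |h x / f x| ^ q * f x := by
  have hh : |h x| = |h x / f x| * f x := by
    rw [abs_div, abs_of_pos hf, div_mul_cancel₀ _ hf.ne']
  have ht : |h x / f x| ≤ 1 + |h x / f x| ^ q := by
    rcases le_total |h x / f x| 1 with h1 | h1
    · linarith [Real.rpow_nonneg (abs_nonneg (h x / f x)) q]
    · linarith [Real.self_le_rpow_of_one_le h1 hq]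
  rw [hh]
  nlinarith

/-- `a ↦ (a / f) f^{1/q}` identifies the weighted `L^q` space with `L^q(μ)`. -/
noncomputable def wtoLp (f : Q → ℝ) (q : ℝ) (a : Q → ℝ) : Q → ℝ :=
  fun x => a x / f x * f x ^ q⁻¹

lemma norm_wtoLp_rpow {a : Q → ℝ} (hf : 0 < f x) (hq : q ≠ 0) :
    ‖wtoLp f q a x‖ ^ q = |a x / f x| ^ q * f x := by
  rw [wtoLp, Real.norm_eq_abs, abs_mul, abs_of_nonneg (Real.rpow_nonneg hf.le _),
    Real.mul_rpow (abs_nonneg _) (Real.rpow_nonneg hf.le _), Real.rpow_inv_rpow hf.le hq]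

lemma norm_wtoLp_mul_norm_wtoLp {a b : Q → ℝ} (hf : 0 < f x)
    (hpq : q.HolderConjugate p) : ‖wtoLp f q a x‖ * ‖wtoLp f p b x‖ = ‖a x * b x / f x‖ := by
  have hff : f x ^ q⁻¹ * f x ^ p⁻¹ = f x := by
    rw [← Real.rpow_add hf, hpq.inv_add_inv_eq_one, Real.rpow_one]
  rw [← norm_mul, wtoLp, wtoLp,
    show a x / f x * f x ^ q⁻¹ * (b x / f x * f x ^ p⁻¹)
      = a x * b x / f x * (f x ^ q⁻¹ * f x ^ p⁻¹ / f x) by ring,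
    hff, div_self hf.ne', mul_one]

lemma wconj_indicator_compl_of_eq_off {g : Q → ℝ} {N : Set Q} (hfg : ∀ x ∉ N, f x = g x)
    (a : Q → ℝ) :
    wconj f q (Nᶜ.indicator a) = wconj g q (Nᶜ.indicator a) := by
  funext x
  by_cases hx : x ∈ N
  · simp [wconj, hx]
  · simp [wconj, hfg x hx]

end Pointwise

section Weighted

variable {Q : Type*} [MeasurableSpace Q] {μ : Measure Q} {f : Q → ℝ} {q p : ℝ}

lemma wnormPow_nonneg (hf_pos : ∀ x, 0 < f x) (h : Q → ℝ) : 0 ≤ wnormPow μ f q h :=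
  integral_nonneg fun x => mul_nonneg (Real.rpow_nonneg (abs_nonneg _) _) (hf_pos x).le

lemma wnormPow_congr_ae {a b : Q → ℝ} (hab : a =ᵐ[μ] b) : wnormPow μ f q a = wnormPow μ f q b :=
  integral_congr_ae (hab.mono fun x hx => by simp only [hx])

lemma wpair_congr_ae {a a' : Q → ℝ} (b : Q → ℝ) (ha : a =ᵐ[μ] a') :
    wpair μ f a b = wpair μ f a' b :=
  integral_congr_ae (ha.mono fun x hx => by simp only [hx])

lemma memWL.indicator {a : Q → ℝ} (ha : memWL μ f q a) {s : Set Q} (hs : MeasurableSet s)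
    (hq : q ≠ 0) : memWL μ f q (s.indicator a) := by
  refine ⟨ha.1.indicator hs, (ha.2.indicator hs).congr (Eventually.of_forall fun x => ?_)⟩
  by_cases hx : x ∈ s <;> simp [hx, Real.zero_rpow hq]

lemma integrable_of_memWL (hf_pos : ∀ x, 0 < f x) (hf_int : Integrable f μ) (hq : 1 ≤ q)
    {a : Q → ℝ} (ha : memWL μ f q a) : Integrable a μ :=
  (hf_int.add ha.2).mono' ha.1.aestronglyMeasurable
    (Eventually.of_forall fun x => abs_le_add_rpow_mul (hf_pos x) hq)

lemma memLp_wtoLp (hf_pos : ∀ x, 0 < f x) (hf : AEMeasurable f μ) (hq : 0 < q)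
    {a : Q → ℝ} (ha : memWL μ f q a) : MemLp (wtoLp f q a) (ENNReal.ofReal q) μ := by
  have hmeas : AEStronglyMeasurable (wtoLp f q a) μ :=
    ((ha.1.aemeasurable.div hf).mul (hf.pow_const _)).aestronglyMeasurable
  refine (integrable_norm_rpow_iff hmeas (by simpa using hq) ENNReal.ofReal_ne_top).1 ?_
  rw [ENNReal.toReal_ofReal hq.le]
  exact ha.2.congr (Eventually.of_forall fun x => (norm_wtoLp_rpow (hf_pos x) hq.ne').symm)

lemma integrable_mul_div (hpq : q.HolderConjugate p) (hf_pos : ∀ x, 0 < f x)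
    (hf : AEMeasurable f μ) {a b : Q → ℝ} (ha : memWL μ f q a) (hb : memWL μ f p b) :
    Integrable (fun x => a x * b x / f x) μ := by
  have := hpq.ennrealOfReal
  have hprod := ((memLp_wtoLp hf_pos hf hpq.pos ha).integrable_mul
    (memLp_wtoLp hf_pos hf hpq.symm.pos hb)).norm
  refine hprod.mono' ((ha.1.aemeasurable.mul hb.1.aemeasurable).div hf).aestronglyMeasurable
    (Eventually.of_forall fun x => ?_)
  rw [Pi.mul_apply, norm_mul, norm_wtoLp_mul_norm_wtoLp (hf_pos x) hpq]

lemma wpair_le_wnormPow_mul_wnormPow (hpq : q.HolderConjugate p) (hf_pos : ∀ x, 0 < f x)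
    (hf : AEMeasurable f μ)
    {a b : Q → ℝ} (ha : memWL μ f q a) (hb : memWL μ f p b) :
    wpair μ f a b ≤ wnormPow μ f q a ^ (1 / q) * wnormPow μ f p b ^ (1 / p) := by
  have := hpq.ennrealOfReal
  have hA := memLp_wtoLp hf_pos hf hpq.pos ha
  have hB := memLp_wtoLp hf_pos hf hpq.symm.pos hb
  calc wpair μ f a b ≤ ∫ x, ‖wtoLp f q a x‖ * ‖wtoLp f p b x‖ ∂μ := by
        refine integral_mono (integrable_mul_div hpq hf_pos hf ha hb)
          (by simpa only [Pi.mul_apply, norm_mul] using (hA.integrable_mul hB).norm) fun x => ?_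
        rw [norm_wtoLp_mul_norm_wtoLp (hf_pos x) hpq]
        exact le_abs_self _
    _ ≤ (∫ x, ‖wtoLp f q a x‖ ^ q ∂μ) ^ (1 / q) * (∫ x, ‖wtoLp f p b x‖ ^ p ∂μ) ^ (1 / p) :=
        integral_mul_norm_le_Lp_mul_Lq hpq hA hB
    _ = wnormPow μ f q a ^ (1 / q) * wnormPow μ f p b ^ (1 / p) := by
        simp only [wnormPow, norm_wtoLp_rpow (hf_pos _) hpq.ne_zero,
          norm_wtoLp_rpow (hf_pos _) hpq.symm.ne_zero]

end Weighted

section Duality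

variable {Q : Type*} [MeasurableSpace Q] {μ : Measure Q} {f g : Q → ℝ} {q p : ℝ}

lemma exists_measurable_eq_off_null (hf : AEMeasurable f μ) :
    ∃ (g : Q → ℝ) (N : Set Q), Measurable g ∧ MeasurableSet N ∧ μ N = 0 ∧
      ∀ x ∉ N, f x = g x := by
  obtain ⟨N, hsub, hN, hN0⟩ := exists_measurable_superset_of_null (ae_iff.1 hf.ae_eq_mk)
  exact ⟨hf.mk f, N, hf.measurable_mk, hN, hN0, fun x hx => by_contra fun h => hx (hsub h)⟩

lemma memWL_wconj (hpq : q.HolderConjugate p) (hf_pos : ∀ x, 0 < f x) (hg : Measurable g)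
    (hfg : f =ᵐ[μ] g) {w : Q → ℝ} (hw : memWL μ f q w) : memWL μ f p (wconj g q w) := by
  refine ⟨hw.1.mul ((hw.1.abs.div hg).pow_const _), hw.2.congr ?_⟩
  filter_upwards [hfg] with x hx
  rw [← abs_wconj_div_rpow_mul (hf_pos x) hpq, wconj, wconj, hx]

lemma wnormPow_wconj (hpq : q.HolderConjugate p) (hf_pos : ∀ x, 0 < f x) (hfg : f =ᵐ[μ] g)
    (w : Q → ℝ) : wnormPow μ f p (wconj g q w) = wnormPow μ f q w := by
  refine integral_congr_ae ?_
  filter_upwards [hfg] with x hx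
  rw [← abs_wconj_div_rpow_mul (hf_pos x) hpq, wconj, wconj, hx]

lemma wpair_wconj (hq : q ≠ 0) (hf_pos : ∀ x, 0 < f x) (hfg : f =ᵐ[μ] g) (w : Q → ℝ) :
    wpair μ f w (wconj g q w) = wnormPow μ f q w := by
  refine integral_congr_ae ?_
  filter_upwards [hfg] with x hx
  rw [← mul_wconj_div (hf_pos x) hq, wconj, wconj, hx]

lemma le_of_le_rpow_mul_rpow (hpq : q.HolderConjugate p) {W L : ℝ} (hW : 0 ≤ W) (hL : 0 ≤ L)
    (h : W ≤ L ^ (1 / q) * W ^ (1 / p)) : W ≤ L := by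
  rcases hW.eq_or_lt with rfl | hW
  · exact hL
  have hsplit : W = W ^ (1 / q) * W ^ (1 / p) := by
    rw [← Real.rpow_add hW, hpq.one_div_add_one_div, div_one, Real.rpow_one]
  have : W ^ (1 / q) ≤ L ^ (1 / q) :=
    le_of_mul_le_mul_right (by rwa [← hsplit]) (Real.rpow_pos_of_pos hW _)
  exact (Real.rpow_le_rpow_iff hW.le hL hpq.one_div_pos).1 this

lemma wnormPow_le_of_weak_tendsto (hpq : q.HolderConjugate p) (hf_pos : ∀ x, 0 < f x)
    (hf : AEMeasurable f μ) {u : ℕ → Q → ℝ} (hu : ∀ n, memWL μ f q (u n)) {L : ℝ}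
    (hL : Tendsto (fun n => wnormPow μ f q (u n)) atTop (nhds L)) {w : Q → ℝ}
    (hw : memWL μ f q w)
    (hweak : ∀ b, memWL μ f p b →
      Tendsto (fun n => wpair μ f (u n) b) atTop (nhds (wpair μ f w b))) :
    wnormPow μ f q w ≤ L := by
  obtain ⟨g, N, hg, -, hN0, hfg⟩ := exists_measurable_eq_off_null hf
  have hfg : f =ᵐ[μ] g := (measure_eq_zero_iff_ae_notMem.1 hN0).mono hfg
  have hC := memWL_wconj hpq hf_pos hg hfg hw
  have hL0 : 0 ≤ L := ge_of_tendsto' hL fun n => wnormPow_nonneg hf_pos _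
  refine le_of_le_rpow_mul_rpow hpq (wnormPow_nonneg hf_pos w) hL0 ?_
  refine le_of_tendsto_of_tendsto' (wpair_wconj hpq.ne_zero hf_pos hfg w ▸ hweak _ hC)
    ((hL.rpow_const (Or.inr hpq.one_div_nonneg)).mul_const _) fun n => ?_
  rw [← wnormPow_wconj hpq hf_pos hfg w]
  exact wpair_le_wnormPow_mul_wnormPow hpq hf_pos hf (hu n) hC

end Duality

lemma iterate_map_add_of_linear {Q : Type*} {T : (Q → ℝ) → (Q → ℝ)}
    (hT_lin : ∀ (a b : Q → ℝ) (c : ℝ), T (fun x => c * a x + b x) = fun x => c * T a x + T b x)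
    (k : ℕ) (u v : Q → ℝ) : T^[k] (u + v) = T^[k] u + T^[k] v := by
  have hT_add (u v : Q → ℝ) : T (u + v) = T u + T v := by
    have h := hT_lin u v 1
    simp only [one_mul] at h
    exact h
  exact iterate_map_add (AddMonoidHom.mk' T hT_add) k u v

lemma exists_strictMono_forall_even_add (m : ℕ → ℕ) :
    ∃ ψ : ℕ → ℕ, StrictMono ψ ∧ ∀ i j, Even (m (ψ i) + m (ψ j)) := by
  by_cases h : ∃ᶠ n in atTop, Even (m n)
  · obtain ⟨ψ, hψ, he⟩ := extraction_of_frequently_atTop h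
    exact ⟨ψ, hψ, fun i j => (he i).add (he j)⟩
  · obtain ⟨ψ, hψ, ho⟩ := extraction_of_eventually_atTop (not_frequently.1 h)
    exact ⟨ψ, hψ, fun i j =>
      (Nat.not_even_iff_odd.1 (ho i)).add_odd (Nat.not_even_iff_odd.1 (ho j))⟩

section Operator

variable {Q : Type*} [MeasurableSpace Q] {μ : Measure Q} {f : Q → ℝ} {q p : ℝ}
  {T : (Q → ℝ) → (Q → ℝ)}

lemma wpair_iterate_left
    (hT_mapsLq : ∀ a, memWL μ f q a → memWL μ f q (T a))
    (hT_mapsLp : ∀ a, memWL μ f p a → memWL μ f p (T a))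
    (hT_selfadj : ∀ a b, memWL μ f q a → memWL μ f p b → wpair μ f (T a) b = wpair μ f a (T b))
    (k : ℕ) {u b : Q → ℝ} (hu : memWL μ f q u) (hb : memWL μ f p b) :
    wpair μ f (T^[k] u) b = wpair μ f u (T^[k] b) := by
  induction k generalizing u with
  | zero => rfl
  | succ k ih =>
    rw [Function.iterate_succ_apply, ih (hT_mapsLq u hu),
      hT_selfadj u _ hu (Function.Iterate.rec (memWL μ f p) hb hT_mapsLp k),
      Function.iterate_succ_apply']

lemma iterate_ae_eq_zero (hf_pos : ∀ x, 0 < f x) (hf_int : Integrable f μ) (hq : 1 ≤ q)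
    (hT_pos : ∀ a : Q → ℝ, (∀ x, 0 ≤ a x) → ∀ x, 0 ≤ T a x)
    (hT_mapsLq : ∀ a, memWL μ f q a → memWL μ f q (T a))
    (hT_mass : ∀ a, memWL μ f q a → Integrable a μ → ∫ x, T a x ∂μ = ∫ x, a x ∂μ)
    {d : Q → ℝ} (hd : memWL μ f q d) (hd0 : ∀ x, 0 ≤ d x) (hd_ae : d =ᵐ[μ] 0) (k : ℕ) :
    T^[k] d =ᵐ[μ] 0 := by
  induction k generalizing d with
  | zero => exact hd_ae
  | succ k ih =>
    refine ih (hT_mapsLq d hd) (hT_pos d hd0) ?_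
    refine (integral_eq_zero_iff_of_nonneg (hT_pos d hd0)
      (integrable_of_memWL hf_pos hf_int hq (hT_mapsLq d hd))).1 ?_
    rw [hT_mass d hd (integrable_of_memWL hf_pos hf_int hq hd), integral_congr_ae hd_ae,
      Pi.zero_def, integral_zero]

lemma iterate_ae_eq_iterate_indicator_compl (hf_pos : ∀ x, 0 < f x) (hf_int : Integrable f μ)
    (hq : 1 ≤ q)
    (hT_lin : ∀ (a b : Q → ℝ) (c : ℝ), T (fun x => c * a x + b x) = fun x => c * T a x + T b x)
    (hT_pos : ∀ a : Q → ℝ, (∀ x, 0 ≤ a x) → ∀ x, 0 ≤ T a x)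
    (hT_mapsLq : ∀ a, memWL μ f q a → memWL μ f q (T a))
    (hT_mass : ∀ a, memWL μ f q a → Integrable a μ → ∫ x, T a x ∂μ = ∫ x, a x ∂μ)
    {N : Set Q} (hN : MeasurableSet N) (hN0 : μ N = 0) {a : Q → ℝ} (ha : memWL μ f q a)
    (ha0 : ∀ x, 0 ≤ a x) (k : ℕ) : T^[k] a =ᵐ[μ] T^[k] (Nᶜ.indicator a) := by
  have hnull : T^[k] (N.indicator a) =ᵐ[μ] 0 :=
    iterate_ae_eq_zero hf_pos hf_int hq hT_pos hT_mapsLq hT_mass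
      (ha.indicator hN (by linarith)) (Set.indicator_nonneg fun x _ => ha0 x)
      ((measure_eq_zero_iff_ae_notMem.1 hN0).mono fun x hx => Set.indicator_of_notMem hx a) k
  have hsplit := iterate_map_add_of_linear hT_lin k (N.indicator a) (Nᶜ.indicator a)
  rw [Set.indicator_self_add_compl] at hsplit
  filter_upwards [hnull] with x hx
  simp [hsplit, hx]

lemma wnormPow_iterate_le_wpair_iterate (hpq : q.HolderConjugate p) (hf_pos : ∀ x, 0 < f x)
    (hf : AEMeasurable f μ)
    (hT_pos : ∀ a : Q → ℝ, (∀ x, 0 ≤ a x) → ∀ x, 0 ≤ T a x)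
    (hT_mapsLq : ∀ a, memWL μ f q a → memWL μ f q (T a))
    (hT_mapsLp : ∀ a, memWL μ f p a → memWL μ f p (T a))
    (hT_selfadj : ∀ a b, memWL μ f q a → memWL μ f p b → wpair μ f (T a) b = wpair μ f a (T b))
    (hT_conj : ∀ a, memWL μ f q a → (∀ x, 0 ≤ a x) →
      ∀ (n : ℕ) (x : Q), wconj f q (T^[n] a) x ≤ T^[n] (wconj f q a) x)
    {a : Q → ℝ} (ha : memWL μ f q a) (ha0 : ∀ x, 0 ≤ a x) (hB : memWL μ f p (wconj f q a))
    (r : ℕ) : wnormPow μ f q (T^[r] a) ≤ wpair μ f (T^[r + r] a) (wconj f q a) := by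
  have hu := Function.Iterate.rec (memWL μ f q) ha hT_mapsLq r
  have hTB := Function.Iterate.rec (memWL μ f p) hB hT_mapsLp r
  calc wnormPow μ f q (T^[r] a) ≤ wpair μ f (T^[r] a) (T^[r] (wconj f q a)) := by
        refine integral_mono hu.2 (integrable_mul_div hpq hf_pos hf hu hTB) fun x => ?_
        have hu0 : 0 ≤ T^[r] a x :=
          Function.Iterate.rec (fun u : Q → ℝ => ∀ x, 0 ≤ u x) ha0 hT_pos r x
        rw [← mul_wconj_div (hf_pos x) hpq.ne_zero]
        gcongr
        · exact (hf_pos x).le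
        · exact hT_conj a ha ha0 r x
    _ = wpair μ f (T^[r + r] a) (wconj f q a) := by
        rw [Function.iterate_add_apply, wpair_iterate_left hT_mapsLq hT_mapsLp hT_selfadj r hu hB]

lemma le_rpow_mul_rpow_of_weak_tendsto_iterate_two_mul (hpq : q.HolderConjugate p)
    (hf_pos : ∀ x, 0 < f x) (hf_int : Integrable f μ)
    (hT_lin : ∀ (a b : Q → ℝ) (c : ℝ), T (fun x => c * a x + b x) = fun x => c * T a x + T b x)
    (hT_pos : ∀ a : Q → ℝ, (∀ x, 0 ≤ a x) → ∀ x, 0 ≤ T a x)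
    (hT_mapsLq : ∀ a, memWL μ f q a → memWL μ f q (T a))
    (hT_mapsLp : ∀ a, memWL μ f p a → memWL μ f p (T a))
    (hT_selfadj : ∀ a b, memWL μ f q a → memWL μ f p b → wpair μ f (T a) b = wpair μ f a (T b))
    (hT_mass : ∀ a, memWL μ f q a → Integrable a μ → ∫ x, T a x ∂μ = ∫ x, a x ∂μ)
    (hT_conj : ∀ a, memWL μ f q a → (∀ x, 0 ≤ a x) →
      ∀ (n : ℕ) (x : Q), wconj f q (T^[n] a) x ≤ T^[n] (wconj f q a) x)
    {a : Q → ℝ} (ha : memWL μ f q a) (ha0 : ∀ x, 0 ≤ a x)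
    {V : ℝ} (hV : ∀ k, V ≤ wnormPow μ f q (T^[k] a)) {r : ℕ → ℕ}
    {w : Q → ℝ} (hw : memWL μ f q w)
    (hweak : ∀ b, memWL μ f p b →
      Tendsto (fun n => wpair μ f (T^[r n + r n] a) b) atTop (nhds (wpair μ f w b))) :
    V ≤ wnormPow μ f q w ^ (1 / q) * wnormPow μ f q a ^ (1 / p) := by
  obtain ⟨g, N, hg, hN, hN0, hfg⟩ := exists_measurable_eq_off_null hf_int.aemeasurable
  have hfg_ae : f =ᵐ[μ] g := (measure_eq_zero_iff_ae_notMem.1 hN0).mono hfg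
  -- `a` is cut off on the null set where `f ≠ g`, so that its conjugate is measurable.
  set a' := Nᶜ.indicator a
  have ha' : memWL μ f q a' := ha.indicator hN.compl hpq.ne_zero
  have hiter (k : ℕ) : T^[k] a =ᵐ[μ] T^[k] a' :=
    iterate_ae_eq_iterate_indicator_compl hf_pos hf_int hpq.lt.le hT_lin hT_pos hT_mapsLq
      hT_mass hN hN0 ha ha0 k
  have hB : wconj f q a' = wconj g q a' := wconj_indicator_compl_of_eq_off hfg a
  have hBmem : memWL μ f p (wconj g q a') := memWL_wconj hpq hf_pos hg hfg_ae ha'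
  have hle (n : ℕ) : V ≤ wpair μ f (T^[r n + r n] a) (wconj g q a') := calc
    V ≤ wnormPow μ f q (T^[r n] a) := hV _
    _ = wnormPow μ f q (T^[r n] a') := wnormPow_congr_ae (hiter _)
    _ ≤ wpair μ f (T^[r n + r n] a') (wconj g q a') := hB ▸
        wnormPow_iterate_le_wpair_iterate hpq hf_pos hf_int.aemeasurable hT_pos hT_mapsLq
          hT_mapsLp hT_selfadj hT_conj ha' (Set.indicator_nonneg fun x _ => ha0 x) (hB ▸ hBmem) _
    _ = wpair μ f (T^[r n + r n] a) (wconj g q a') := wpair_congr_ae _ (hiter _).symm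
  calc V ≤ wpair μ f w (wconj g q a') := ge_of_tendsto' (hweak _ hBmem) hle
    _ ≤ wnormPow μ f q w ^ (1 / q) * wnormPow μ f p (wconj g q a') ^ (1 / p) :=
        wpair_le_wnormPow_mul_wnormPow hpq hf_pos hf_int.aemeasurable hw hBmem
    _ = wnormPow μ f q w ^ (1 / q) * wnormPow μ f q a ^ (1 / p) := by
        rw [wnormPow_wconj hpq hf_pos hfg_ae, ← wnormPow_congr_ae (show a =ᵐ[μ] a' from hiter 0)]

lemma le_wnormPow_of_weak_tendsto_iterate (hpq : q.HolderConjugate p)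
    (hf_pos : ∀ x, 0 < f x) (hf_int : Integrable f μ)
    (hT_lin : ∀ (a b : Q → ℝ) (c : ℝ), T (fun x => c * a x + b x) = fun x => c * T a x + T b x)
    (hT_pos : ∀ a : Q → ℝ, (∀ x, 0 ≤ a x) → ∀ x, 0 ≤ T a x)
    (hT_mapsLq : ∀ a, memWL μ f q a → memWL μ f q (T a))
    (hT_mapsLp : ∀ a, memWL μ f p a → memWL μ f p (T a))
    (hT_selfadj : ∀ a b, memWL μ f q a → memWL μ f p b → wpair μ f (T a) b = wpair μ f a (T b))
    (hT_mass : ∀ a, memWL μ f q a → Integrable a μ → ∫ x, T a x ∂μ = ∫ x, a x ∂μ)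
    (hT_conj : ∀ a, memWL μ f q a → (∀ x, 0 ≤ a x) →
      ∀ (n : ℕ) (x : Q), wconj f q (T^[n] a) x ≤ T^[n] (wconj f q a) x)
    {h₀ : Q → ℝ} (h₀_nonneg : ∀ x, 0 ≤ h₀ x) (h₀_mem : memWL μ f q h₀)
    {V : ℝ} (hV : Tendsto (fun n => wnormPow μ f q (T^[n] h₀)) atTop (nhds V))
    (hV_le : ∀ n, V ≤ wnormPow μ f q (T^[n] h₀))
    {m : ℕ → ℕ} (hm : StrictMono m) {w : Q → ℝ} (hw : memWL μ f q w)
    (hweak : ∀ b, memWL μ f p b →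
      Tendsto (fun n => wpair μ f (T^[m n] h₀) b) atTop (nhds (wpair μ f w b))) :
    V ≤ wnormPow μ f q w := by
  obtain ⟨ψ, hψ, hpar⟩ := exists_strictMono_forall_even_add m
  have hmψ : StrictMono (m ∘ ψ) := hm.comp hψ
  have hbound (j : ℕ) :
      V ≤ wnormPow μ f q w ^ (1 / q) * wnormPow μ f q (T^[m (ψ j)] h₀) ^ (1 / p) := by
    have hr (n : ℕ) : ∃ r, m (ψ (n + j)) = r + r + m (ψ j) := by
      obtain ⟨k, hk⟩ := hpar j (n + j)
      have := hmψ.monotone (Nat.le_add_left j n)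
      exact ⟨k - m (ψ j), by simp only [Function.comp_apply] at this; omega⟩
    choose r hr using hr
    refine le_rpow_mul_rpow_of_weak_tendsto_iterate_two_mul hpq hf_pos hf_int hT_lin hT_pos
      hT_mapsLq hT_mapsLp hT_selfadj hT_mass hT_conj
      (Function.Iterate.rec (memWL μ f q) h₀_mem hT_mapsLq _)
      (Function.Iterate.rec (fun u : Q → ℝ => ∀ x, 0 ≤ u x) h₀_nonneg hT_pos _)
      (fun k => by rw [← Function.iterate_add_apply]; exact hV_le _) (r := r) hw fun b hb => ?_
    refine ((hweak b hb).comp (hψ.tendsto_atTop.comp (tendsto_add_atTop_nat j))).congr fun n => ?_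
    simp only [Function.comp_apply, hr n, Function.iterate_add_apply]
  have hlim : Tendsto (fun j => wnormPow μ f q w ^ (1 / q) *
      wnormPow μ f q (T^[m (ψ j)] h₀) ^ (1 / p)) atTop
      (nhds (wnormPow μ f q w ^ (1 / q) * V ^ (1 / p))) :=
    ((hV.comp hmψ.tendsto_atTop).rpow_const (Or.inr hpq.symm.one_div_nonneg)).const_mul _
  exact le_of_le_rpow_mul_rpow hpq (ge_of_tendsto' hV fun n => wnormPow_nonneg hf_pos _)
    (wnormPow_nonneg hf_pos w) (ge_of_tendsto' hlim hbound)

end Operator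

theorem hmc_weak_limit_norm_general
    {Q : Type*} [MeasurableSpace Q] (μ : Measure Q)
    (f : Q → ℝ) (hf_pos : ∀ x, 0 < f x) (hf_int : Integrable f μ)
    (q p : ℝ) (hq : 2 ≤ q) (hqp : 1 / q + 1 / p = 1)
    (T : (Q → ℝ) → (Q → ℝ))
    (hT_lin : ∀ (a b : Q → ℝ) (c : ℝ), T (fun x => c * a x + b x) = fun x => c * T a x + T b x)
    (hT_pos : ∀ a : Q → ℝ, (∀ x, 0 ≤ a x) → ∀ x, 0 ≤ T a x)
    (hT_mapsLq : ∀ a, memWL μ f q a → memWL μ f q (T a))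
    (hT_mapsLp : ∀ a, memWL μ f p a → memWL μ f p (T a))
    (hT_selfadj : ∀ a b, memWL μ f q a → memWL μ f p b → wpair μ f (T a) b = wpair μ f a (T b))
    (hT_contr : ∀ a, memWL μ f q a → wnormPow μ f q (T a) ≤ wnormPow μ f q a)
    (hT_mass : ∀ a, memWL μ f q a → Integrable a μ → ∫ x, T a x ∂μ = ∫ x, a x ∂μ)
    (hT_conj : ∀ a, memWL μ f q a → (∀ x, 0 ≤ a x) →
      ∀ (n : ℕ) (x : Q), wconj f q (T^[n] a) x ≤ T^[n] (wconj f q a) x)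
    (h₀ : Q → ℝ) (h₀_nonneg : ∀ x, 0 ≤ h₀ x) (h₀_mem : memWL μ f q h₀)
    (V : ℝ) (hV : Tendsto (fun n => wnormPow μ f q (T^[n] h₀)) atTop (nhds V))
    (m : ℕ → ℕ) (hm : StrictMono m)
    (hinf : Q → ℝ) (hinf_mem : memWL μ f q hinf)
    (h_weak : ∀ b, memWL μ f p b →
      Tendsto (fun n => wpair μ f (T^[m n] h₀) b) atTop (nhds (wpair μ f hinf b))) :
    wnormPow μ f q hinf = V := by
  have hpq : q.HolderConjugate p :=
    Real.holderConjugate_iff.2 ⟨by linarith, by simpa only [one_div] using hqp⟩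
  have hmem (n : ℕ) : memWL μ f q (T^[n] h₀) := Function.Iterate.rec _ h₀_mem hT_mapsLq n
  have hV_le : ∀ n, V ≤ wnormPow μ f q (T^[n] h₀) :=
    Antitone.le_of_tendsto (antitone_nat_of_succ_le fun n => by
      rw [Function.iterate_succ_apply']
      exact hT_contr _ (hmem n)) hV
  refine le_antisymm (wnormPow_le_of_weak_tendsto hpq hf_pos hf_int.aemeasurable
    (fun n => hmem (m n)) (hV.comp hm.tendsto_atTop) hinf_mem h_weak) ?_
  exact le_wnormPow_of_weak_tendsto_iterate hpq hf_pos hf_int hT_lin hT_pos hT_mapsLq hT_mapsLp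
    hT_selfadj hT_mass hT_conj h₀_nonneg h₀_mem hV hV_le hm hinf_mem h_weak

/-- Any weak subsequential limit `h∞` of the iterates `T^n h₀` of a positive self-adjoint
mass-preserving contraction (strict off the ray `ℝ·f`, and satisfying the conjugate
comparison) has `‖h∞‖_q^q = V = lim ‖T^n h₀‖_q^q`. -/
theorem hmc_weak_limit_norm
    {Q : Type*} [MeasurableSpace Q] (μ : Measure Q)
    (f : Q → ℝ) (hf_pos : ∀ x, 0 < f x) (hf_int : Integrable f μ)
    (q p : ℝ) (hq : 2 ≤ q) (hp : 1 < p) (hqp : 1 / q + 1 / p = 1)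
    (T : (Q → ℝ) → (Q → ℝ))
    (hT_lin : ∀ (a b : Q → ℝ) (c : ℝ), T (fun x => c * a x + b x) = fun x => c * T a x + T b x)
    (hT_pos : ∀ a : Q → ℝ, (∀ x, 0 ≤ a x) → ∀ x, 0 ≤ T a x)
    (hT_mapsLq : ∀ a, memWL μ f q a → memWL μ f q (T a))
    (hT_mapsLp : ∀ a, memWL μ f p a → memWL μ f p (T a))
    (hT_selfadj : ∀ a b, memWL μ f q a → memWL μ f p b → wpair μ f (T a) b = wpair μ f a (T b))
    (hT_contr : ∀ a, memWL μ f q a → wnormPow μ f q (T a) ≤ wnormPow μ f q a)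
    (hT_strict : ∀ a, memWL μ f q a → (∀ x, 0 ≤ a x) →
      wnormPow μ f q (T a) = wnormPow μ f q a → ∃ α : ℝ, a =ᵐ[μ] fun x => α * f x)
    (hT_mass : ∀ a, memWL μ f q a → Integrable a μ → ∫ x, T a x ∂μ = ∫ x, a x ∂μ)
    (hT_conj : ∀ a, memWL μ f q a → (∀ x, 0 ≤ a x) →
      ∀ (n : ℕ) (x : Q), wconj f q (T^[n] a) x ≤ T^[n] (wconj f q a) x)
    (h₀ : Q → ℝ) (h₀_nonneg : ∀ x, 0 ≤ h₀ x) (h₀_mem : memWL μ f q h₀)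
    (V : ℝ) (hV : Tendsto (fun n => wnormPow μ f q (T^[n] h₀)) atTop (nhds V))
    (m : ℕ → ℕ) (hm : StrictMono m)
    (hinf : Q → ℝ) (hinf_mem : memWL μ f q hinf)
    (h_weak : ∀ b, memWL μ f p b →
      Tendsto (fun n => wpair μ f (T^[m n] h₀) b) atTop (nhds (wpair μ f hinf b))) :
    wnormPow μ f q hinf = V :=
  hmc_weak_limit_norm_general μ f hf_pos hf_int q p hq hqp T hT_lin hT_pos hT_mapsLq hT_mapsLp
    hT_selfadj hT_contr hT_mass hT_conj h₀ h₀_nonneg h₀_mem V hV m hm hinf hinf_mem h_weak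
end

section
/- For q ≥ 2 and h₀ ≥ 0 in weighted L^q, the iterates T^n(h₀) converge weakly to α f with α = (∫_Q h₀)/(∫_Q f). -/
/-!
The norms `‖T^n h₀‖_q^q` decrease, hence converge to some `V`. By weak compactness every
subsequence of the orbit has a further subsequence converging weakly to some `k`; by
self-adjointness the shifted subsequence then converges weakly to `T k`, so `k` and `T k` both have
norm `V`, and the equality case of the contraction forces `k = c f`. Testing against `f` shows that
mass is preserved in the weak limit, which pins down `c = (∫ h₀)/(∫ f)`. As every subsequence has a
further subsequence with this same limit, the whole orbit converges weakly to it.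
-/

open MeasureTheory Filter

open Topology

namespace WeightedLp

variable {Q : Type*} [MeasurableSpace Q] {μ : Measure Q} {f : Q → ℝ}

def TendstoWeakly (μ : Measure Q) (f : Q → ℝ) (p : ℝ) (u : ℕ → Q → ℝ) (k : Q → ℝ) : Prop :=
  ∀ b, memWL μ f p b → Tendsto (fun n => wpair μ f (u n) b) atTop (𝓝 (wpair μ f k b))

lemma le_one_add_rpow {t q : ℝ} (ht : 0 ≤ t) (hq : 1 ≤ q) : t ≤ 1 + t ^ q := by
  rcases le_total t 1 with h | h
  · linarith [Real.rpow_nonneg ht q]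
  · linarith [Real.self_le_rpow_of_one_le h hq]

lemma integrable_of_memWL (hf_pos : ∀ x, 0 < f x) (hf_int : Integrable f μ) {q : ℝ} (hq : 1 ≤ q)
    {h : Q → ℝ} (hh : memWL μ f q h) : Integrable h μ := by
  refine (hf_int.add hh.2).mono' hh.1.aestronglyMeasurable (Eventually.of_forall fun x => ?_)
  have hfx := hf_pos x
  calc ‖h x‖ = |h x / f x| * f x := by
        rw [Real.norm_eq_abs, abs_div, abs_of_pos hfx, div_mul_cancel₀ _ hfx.ne']
    _ ≤ (1 + |h x / f x| ^ q) * f x :=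
        mul_le_mul_of_nonneg_right (le_one_add_rpow (abs_nonneg _) hq) hfx.le
    _ = f x + |h x / f x| ^ q * f x := by ring

lemma wnormPow_nonneg (hf : ∀ x, 0 ≤ f x) (q : ℝ) (h : Q → ℝ) : 0 ≤ wnormPow μ f q h :=
  integral_nonneg fun x => mul_nonneg (Real.rpow_nonneg (abs_nonneg _) q) (hf x)

lemma wpair_congr_ae {a a' : Q → ℝ} (h : a =ᵐ[μ] a') (b : Q → ℝ) :
    wpair μ f a b = wpair μ f a' b :=
  integral_congr_ae (by filter_upwards [h] with x hx; rw [hx])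

/-- `f` need not be measurable, so the test function is a measurable modification of it. -/
lemma exists_memWL_wpair_eq_integral (hf_pos : ∀ x, 0 < f x) (hf_int : Integrable f μ) (p : ℝ) :
    ∃ g, memWL μ f p g ∧ ∀ a, wpair μ f a g = ∫ x, a x ∂μ := by
  have hg := hf_int.1.ae_eq_mk
  refine ⟨hf_int.1.mk f, ⟨hf_int.1.stronglyMeasurable_mk.measurable, hf_int.congr ?_⟩,
    fun a => integral_congr_ae ?_⟩
  · filter_upwards [hg] with x hx
    rw [← hx, div_self (hf_pos x).ne', abs_one, Real.one_rpow, one_mul]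
  · filter_upwards [hg] with x hx
    rw [← hx, mul_div_assoc, div_self (hf_pos x).ne', mul_one]

lemma integral_eq_of_tendstoWeakly (hf_pos : ∀ x, 0 < f x) (hf_int : Integrable f μ) {p c : ℝ}
    {u : ℕ → Q → ℝ} {k : Q → ℝ} (hu : ∀ n, ∫ x, u n x ∂μ = c) (huk : TendstoWeakly μ f p u k) :
    ∫ x, k x ∂μ = c := by
  obtain ⟨g, hg, hpair⟩ := exists_memWL_wpair_eq_integral hf_pos hf_int p
  have hlim := huk g hg
  simp only [hpair, hu] at hlim
  exact tendsto_nhds_unique hlim tendsto_const_nhds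

/-- If `∫ f = 0` then `μ = 0`, so the junk value of the quotient is harmless. -/
lemma ae_eq_integral_div_mul (hf_pos : ∀ x, 0 < f x) (hf_int : Integrable f μ) {k : Q → ℝ}
    {c : ℝ} (hk : k =ᵐ[μ] fun x => c * f x) :
    k =ᵐ[μ] fun x => (∫ x, k x ∂μ) / (∫ x, f x ∂μ) * f x := by
  rcases eq_or_ne μ 0 with rfl | hμ
  · simp [EventuallyEq]
  have hI : 0 < ∫ x, f x ∂μ := by
    rw [integral_pos_iff_support_of_nonneg (fun x => (hf_pos x).le) hf_int,
      show Function.support f = Set.univ from Set.eq_univ_of_forall fun x => (hf_pos x).ne']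
    exact Measure.measure_univ_pos.mpr hμ
  rwa [integral_congr_ae hk, integral_const_mul, mul_div_cancel_right₀ _ hI.ne']

variable {q p : ℝ} {T : (Q → ℝ) → (Q → ℝ)}

lemma memWL_iterate (hT : ∀ a, memWL μ f q a → memWL μ f q (T a)) {h : Q → ℝ}
    (hh : memWL μ f q h) (n : ℕ) : memWL μ f q (T^[n] h) :=
  Function.Iterate.rec _ hh hT n

lemma integral_iterate (hf_pos : ∀ x, 0 < f x) (hf_int : Integrable f μ) (hq : 1 ≤ q)
    (hT : ∀ a, memWL μ f q a → memWL μ f q (T a))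
    (hT_mass : ∀ a, memWL μ f q a → Integrable a μ → ∫ x, T a x ∂μ = ∫ x, a x ∂μ)
    {h : Q → ℝ} (hh : memWL μ f q h) (n : ℕ) : ∫ x, T^[n] h x ∂μ = ∫ x, h x ∂μ := by
  induction n with
  | zero => rfl
  | succ n ih =>
    have hn := memWL_iterate hT hh n
    rw [Function.iterate_succ_apply', hT_mass _ hn (integrable_of_memWL hf_pos hf_int hq hn), ih]

lemma exists_tendsto_wnormPow_iterate (hf_pos : ∀ x, 0 < f x)
    (hT : ∀ a, memWL μ f q a → memWL μ f q (T a))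
    (hT_contr : ∀ a, memWL μ f q a → wnormPow μ f q (T a) ≤ wnormPow μ f q a)
    {h : Q → ℝ} (hh : memWL μ f q h) :
    ∃ V, Tendsto (fun n => wnormPow μ f q (T^[n] h)) atTop (𝓝 V) := by
  refine ⟨_, tendsto_atTop_ciInf (antitone_nat_of_succ_le fun n => ?_)
    ⟨0, Set.forall_mem_range.mpr fun n => wnormPow_nonneg (fun x => (hf_pos x).le) q _⟩⟩
  rw [Function.iterate_succ_apply']
  exact hT_contr _ (memWL_iterate hT hh n)

lemma TendstoWeakly.map (hT_mapsLp : ∀ a, memWL μ f p a → memWL μ f p (T a))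
    (hT_selfadj : ∀ a b, memWL μ f q a → memWL μ f p b → wpair μ f (T a) b = wpair μ f a (T b))
    {u : ℕ → Q → ℝ} {k : Q → ℝ} (hu : ∀ n, memWL μ f q (u n)) (hk : memWL μ f q k)
    (huk : TendstoWeakly μ f p u k) : TendstoWeakly μ f p (fun n => T (u n)) (T k) := by
  intro b hb
  simp only [hT_selfadj _ b (hu _) hb, hT_selfadj k b hk hb]
  exact huk (T b) (hT_mapsLp b hb)

end WeightedLp

open WeightedLp

theorem hmc_weak_convergence_general
    {Q : Type*} [MeasurableSpace Q] (μ : Measure Q)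
    (f : Q → ℝ) (hf_pos : ∀ x, 0 < f x) (hf_int : Integrable f μ)
    (q p : ℝ) (hq : 2 ≤ q)
    (T : (Q → ℝ) → (Q → ℝ))
    (hT_mapsLq : ∀ a, memWL μ f q a → memWL μ f q (T a))
    (hT_mapsLp : ∀ a, memWL μ f p a → memWL μ f p (T a))
    (hT_selfadj : ∀ a b, memWL μ f q a → memWL μ f p b → wpair μ f (T a) b = wpair μ f a (T b))
    (hT_contr : ∀ a, memWL μ f q a → wnormPow μ f q (T a) ≤ wnormPow μ f q a)
    (hT_strict : ∀ a, memWL μ f q a →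
      wnormPow μ f q (T a) = wnormPow μ f q a → ∃ α : ℝ, a =ᵐ[μ] fun x => α * f x)
    (hT_mass : ∀ a, memWL μ f q a → Integrable a μ → ∫ x, T a x ∂μ = ∫ x, a x ∂μ)
    -- weak sequential compactness of the bounded orbit (reflexivity of `L^q`)
    (h_compact : ∀ h : Q → ℝ, memWL μ f q h → ∀ m : ℕ → ℕ, StrictMono m →
      ∃ (m' : ℕ → ℕ) (k : Q → ℝ), StrictMono m' ∧ memWL μ f q k ∧
        ∀ b, memWL μ f p b →
          Tendsto (fun n => wpair μ f (T^[m (m' n)] h) b) atTop (nhds (wpair μ f k b)))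
    -- every weak subsequential limit of the orbit has norm `V = lim ‖T^n h₀‖_q^q`
    (h_limnorm : ∀ (h₀ : Q → ℝ), memWL μ f q h₀ → (∀ x, 0 ≤ h₀ x) →
      ∀ (V : ℝ), Tendsto (fun n => wnormPow μ f q (T^[n] h₀)) atTop (nhds V) →
      ∀ (m : ℕ → ℕ), StrictMono m → ∀ k, memWL μ f q k →
        (∀ b, memWL μ f p b →
          Tendsto (fun n => wpair μ f (T^[m n] h₀) b) atTop (nhds (wpair μ f k b))) →
        wnormPow μ f q k = V)
    (h₀ : Q → ℝ) (h₀_nonneg : ∀ x, 0 ≤ h₀ x) (h₀_mem : memWL μ f q h₀) :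
    ∀ b, memWL μ f p b →
      Tendsto (fun n => wpair μ f (T^[n] h₀) b) atTop
        (nhds (wpair μ f (fun x => ((∫ x, h₀ x ∂μ) / (∫ x, f x ∂μ)) * f x) b)) := by
  intro b hb
  have hq1 : 1 ≤ q := by linarith
  obtain ⟨V, hV⟩ := exists_tendsto_wnormPow_iterate hf_pos hT_mapsLq hT_contr h₀_mem
  refine tendsto_of_subseq_tendsto fun ns hns => ?_
  obtain ⟨φ, -, hφ⟩ := strictMono_subseq_of_tendsto_atTop hns
  obtain ⟨m', k, hm', hk, hconv⟩ := h_compact h₀ h₀_mem (ns ∘ φ) hφ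
  have hconvT : TendstoWeakly μ f p (fun n => T^[ns (φ (m' n)) + 1] h₀) (T k) := by
    simpa only [Function.iterate_succ_apply', Function.comp_apply] using
      TendstoWeakly.map hT_mapsLp hT_selfadj (fun n => memWL_iterate hT_mapsLq h₀_mem _) hk hconv
  have hk_norm := h_limnorm h₀ h₀_mem h₀_nonneg V hV _ (hφ.comp hm') k hk hconv
  have hTk_norm := h_limnorm h₀ h₀_mem h₀_nonneg V hV _
    ((hφ.comp hm').add_const 1) (T k) (hT_mapsLq k hk) hconvT
  obtain ⟨c, hc⟩ := hT_strict k hk (hTk_norm.trans hk_norm.symm)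
  have hk_mass : ∫ x, k x ∂μ = ∫ x, h₀ x ∂μ :=
    integral_eq_of_tendstoWeakly hf_pos hf_int
      (fun n => integral_iterate hf_pos hf_int hq1 hT_mapsLq hT_mass h₀_mem _) hconv
  refine ⟨φ ∘ m', ?_⟩
  rw [← hk_mass, ← wpair_congr_ae (ae_eq_integral_div_mul hf_pos hf_int hc)]
  exact hconv b hb

/-- For `q ≥ 2` and nonnegative `h₀` in weighted `L^q`, the iterates `T^n h₀` of the
self-adjoint HMC operator converge weakly to `α f` with `α = (∫ h₀)/(∫ f)`. -/
theorem hmc_weak_convergence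
    {Q : Type*} [MeasurableSpace Q] (μ : Measure Q)
    (f : Q → ℝ) (hf_pos : ∀ x, 0 < f x) (hf_int : Integrable f μ)
    (q p : ℝ) (hq : 2 ≤ q) (hp : 1 < p) (hqp : 1 / q + 1 / p = 1)
    (T : (Q → ℝ) → (Q → ℝ))
    (hT_lin : ∀ (a b : Q → ℝ) (c : ℝ), T (fun x => c * a x + b x) = fun x => c * T a x + T b x)
    (hT_mapsLq : ∀ a, memWL μ f q a → memWL μ f q (T a))
    (hT_mapsLp : ∀ a, memWL μ f p a → memWL μ f p (T a))
    (hT_selfadj : ∀ a b, memWL μ f q a → memWL μ f p b → wpair μ f (T a) b = wpair μ f a (T b))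
    (hT_contr : ∀ a, memWL μ f q a → wnormPow μ f q (T a) ≤ wnormPow μ f q a)
    (hT_strict : ∀ a, memWL μ f q a →
      wnormPow μ f q (T a) = wnormPow μ f q a → ∃ α : ℝ, a =ᵐ[μ] fun x => α * f x)
    (hT_mass : ∀ a, memWL μ f q a → Integrable a μ → ∫ x, T a x ∂μ = ∫ x, a x ∂μ)
    -- weak sequential compactness of the bounded orbit (reflexivity of `L^q`)
    (h_compact : ∀ h : Q → ℝ, memWL μ f q h → ∀ m : ℕ → ℕ, StrictMono m →
      ∃ (m' : ℕ → ℕ) (k : Q → ℝ), StrictMono m' ∧ memWL μ f q k ∧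
        ∀ b, memWL μ f p b →
          Tendsto (fun n => wpair μ f (T^[m (m' n)] h) b) atTop (nhds (wpair μ f k b)))
    -- every weak subsequential limit of the orbit has norm `V = lim ‖T^n h₀‖_q^q`
    (h_limnorm : ∀ (h₀ : Q → ℝ), memWL μ f q h₀ → (∀ x, 0 ≤ h₀ x) →
      ∀ (V : ℝ), Tendsto (fun n => wnormPow μ f q (T^[n] h₀)) atTop (nhds V) →
      ∀ (m : ℕ → ℕ), StrictMono m → ∀ k, memWL μ f q k →
        (∀ b, memWL μ f p b →
          Tendsto (fun n => wpair μ f (T^[m n] h₀) b) atTop (nhds (wpair μ f k b))) →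
        wnormPow μ f q k = V)
    (h₀ : Q → ℝ) (h₀_nonneg : ∀ x, 0 ≤ h₀ x) (h₀_mem : memWL μ f q h₀)
    (h₀_int : Integrable h₀ μ) :
    ∀ b, memWL μ f p b →
      Tendsto (fun n => wpair μ f (T^[n] h₀) b) atTop
        (nhds (wpair μ f (fun x => ((∫ x, h₀ x ∂μ) / (∫ x, f x ∂μ)) * f x) b)) :=
  hmc_weak_convergence_general μ f hf_pos hf_int q p hq T hT_mapsLq hT_mapsLp hT_selfadj hT_contr
    hT_strict hT_mass h_compact h_limnorm h₀ h₀_nonneg h₀_mem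
end
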